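/- arXiv:math/0312096 — 3 statements merged into one kernel-verified Lean document; each statement's English description precedes it below -/
import Mathlib

section
/- Let X be a geodesic metric space and let Γ act cocompactly by isometries on X, say X = ⋃_{γ∈Γ} γC for a compact set C. Fix p ∈ X. Suppose there is a constant C₀ such that for every γ ∈ Γ there is a geodesic ray α from p with d(γp, α([0,∞))) ≤ C₀. Then X is almost geodesically complete: there is a constant C₁ such that for all q, q' ∈ X there is a geodesic ray β with β(0) = q and d(q', β([0,∞))) ≤ C₁. -/
open Metric Set

/-- A unit-speed geodesic segment from `x` to `y`, parametrized on `[0, dist x y]`. -/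
def IsGeodesicSegment {X : Type*} [MetricSpace X] (γ : ℝ → X) (x y : X) : Prop :=
  γ 0 = x ∧ γ (dist x y) = y ∧
    ∀ s ∈ Set.Icc (0:ℝ) (dist x y), ∀ t ∈ Set.Icc (0:ℝ) (dist x y),
      dist (γ s) (γ t) = |s - t|

/-- A geodesic metric space: any two points are joined by a geodesic segment. -/
def GeodesicSpace (X : Type*) [MetricSpace X] : Prop :=
  ∀ x y : X, ∃ γ : ℝ → X, IsGeodesicSegment γ x y

/-- CAT(0): a geodesic space in which every geodesic triangle satisfies the Euclidean
comparison inequality (stated as the standard convexity/comparison inequality along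
geodesics, which is equivalent to the CAT(0) condition). -/
def CAT0 (X : Type*) [MetricSpace X] : Prop :=
  GeodesicSpace X ∧
    ∀ (y z : X) (γ : ℝ → X), IsGeodesicSegment γ y z → ∀ x : X, ∀ t ∈ Set.Icc (0:ℝ) 1,
      dist x (γ (t * dist y z)) ^ 2 ≤
        (1 - t) * dist x y ^ 2 + t * dist x z ^ 2 - t * (1 - t) * dist y z ^ 2

/-- A (unit-speed) geodesic ray, parametrized on `[0, ∞)`. -/
def IsGeodesicRay {X : Type*} [MetricSpace X] (α : ℝ → X) : Prop :=
  ∀ s t : ℝ, 0 ≤ s → 0 ≤ t → dist (α s) (α t) = |s - t|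

/-! The orbit of `p` is `R`-dense for some `R`. Given `q, q'`, pick `γ, γ'` with `q` near `γ • p`
and `q'` near `γ' • p`, and a ray `α` from `p` passing within `C₀` of `γ⁻¹γ' • p`; then `γ ∘ α`
passes within `C₀` of `γ' • p`, and it remains to find a ray from `q` staying within `d(q, γ • p)`
of `γ ∘ α`. In a proper CAT(0) space such a ray is a pointwise cluster point of the geodesic
segments from `q` to `γ (α n)`: comparison in the triangle `q, γ (α 0), γ (α n)` keeps each segment
within `d(q, γ • p)` of `γ ∘ α`, and the segments cluster by Tychonoff since closed balls are
compact. -/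

open Filter

section Geodesics

variable {X : Type*} [MetricSpace X]

lemma IsGeodesicRay.isometry_comp {Y : Type*} [MetricSpace Y] {α : ℝ → X} (hα : IsGeodesicRay α)
    {f : X → Y} (hf : Isometry f) : IsGeodesicRay (f ∘ α) :=
  fun s t hs ht => (hf.dist_eq _ _).trans (hα s t hs ht)

lemma IsGeodesicRay.isGeodesicSegment {α : ℝ → X} (hα : IsGeodesicRay α) {T : ℝ} (hT : 0 ≤ T) :
    IsGeodesicSegment α (α 0) (α T) := by
  have hdist : dist (α 0) (α T) = T := by
    rw [hα 0 T le_rfl hT, zero_sub, abs_neg, abs_of_nonneg hT]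
  exact ⟨rfl, by rw [hdist], fun s hs t ht => hα s t hs.1 ht.1⟩

/-- Clamping the parameter to `[0, d(x, y)]` makes the segment constant outside that interval. -/
lemma GeodesicSpace.exists_segment_dist_le_abs (hX : GeodesicSpace X) (x y : X) :
    ∃ γ : ℝ → X, IsGeodesicSegment γ x y ∧ ∀ s, dist x (γ s) ≤ |s| := by
  obtain ⟨γ, hγx, hγy, hγ⟩ := hX x y
  set clamp : ℝ → ℝ := fun s => max 0 (min s (dist x y))
  have hclamp_mem : ∀ s, clamp s ∈ Icc 0 (dist x y) :=
    fun s => ⟨le_max_left _ _, max_le dist_nonneg (min_le_right _ _)⟩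
  have hclamp_eq : ∀ s ∈ Icc 0 (dist x y), clamp s = s :=
    fun s hs => by simp only [clamp, min_eq_left hs.2, max_eq_right hs.1]
  refine ⟨γ ∘ clamp, ⟨?_, ?_, fun s hs t ht => ?_⟩, fun s => ?_⟩
  · simp [hclamp_eq 0 ⟨le_rfl, dist_nonneg⟩, hγx]
  · simp [hclamp_eq _ ⟨dist_nonneg, le_rfl⟩, hγy]
  · simp only [Function.comp_apply, hclamp_eq s hs, hclamp_eq t ht, hγ s hs t ht]
  · calc dist x (γ (clamp s)) = clamp s := by
          rw [← hγx, hγ 0 ⟨le_rfl, dist_nonneg⟩ _ (hclamp_mem s), zero_sub, abs_neg,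
            abs_of_nonneg (hclamp_mem s).1]
      _ ≤ |s| := max_le (abs_nonneg s) ((min_le_left _ _).trans (le_abs_self s))

end Geodesics

section CAT0

variable {X : Type*} [MetricSpace X]

/-- Apply the comparison inequality at `z` along `γ` and at `γ (t * dist y x)` along `δ`; after
multiplying the first by `1 - t` and adding, all terms but `(1 - t) ^ 2 * dist y z ^ 2` cancel. -/
lemma CAT0.dist_le_of_common_endpoint (hX : CAT0 X) {γ δ : ℝ → X} {x y z : X}
    (hγ : IsGeodesicSegment γ y x) (hδ : IsGeodesicSegment δ z x) {t : ℝ} (ht : t ∈ Icc (0 : ℝ) 1) :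
    dist (γ (t * dist y x)) (δ (t * dist z x)) ≤ (1 - t) * dist y z := by
  set m := γ (t * dist y x)
  have hmx : dist m x = (1 - t) * dist y x := by
    have hγm := hγ.2.2 (t * dist y x) ⟨by nlinarith [ht.1, dist_nonneg (x := y) (y := x)],
      mul_le_of_le_one_left dist_nonneg ht.2⟩ (dist y x) ⟨dist_nonneg, le_rfl⟩
    rw [hγ.2.1] at hγm
    rw [hγm, abs_of_nonpos (by nlinarith [ht.2, dist_nonneg (x := y) (y := x)])]
    ring
  have hzm := hX.2 y x γ hγ z t ht
  have hmδ := hX.2 z x δ hδ m t ht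
  rw [dist_comm m z, hmx] at hmδ
  have hsq : dist m (δ (t * dist z x)) ^ 2 ≤ ((1 - t) * dist y z) ^ 2 := by
    rw [dist_comm z y] at hzm
    nlinarith [mul_le_mul_of_nonneg_left hzm (sub_nonneg.2 ht.2)]
  exact (pow_le_pow_iff_left₀ dist_nonneg
    (mul_nonneg (sub_nonneg.2 ht.2) dist_nonneg) two_ne_zero).1 hsq

/-- Comparison at the fraction `s / T` of both segments into `α T` gives
`(1 - s / T) * dist q (α 0)`, and moving along `σ` from time `s / T * dist q (α T)` to time `s`
costs at most `s / T * dist q (α 0)`. -/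
lemma CAT0.dist_segment_ray_le (hX : CAT0 X) {α σ : ℝ → X} (hα : IsGeodesicRay α) {q : X} {T : ℝ}
    (hT : 0 < T) (hσ : IsGeodesicSegment σ q (α T)) {s : ℝ} (hs : 0 ≤ s) (hsT : s ≤ T)
    (hsσ : s ≤ dist q (α T)) : dist (σ s) (α s) ≤ dist q (α 0) := by
  have hαT := hα.isGeodesicSegment hT.le
  have hdist : dist (α 0) (α T) = T := by rw [hα 0 T le_rfl hT.le, zero_sub, abs_neg, abs_of_pos hT]
  set t := s / T
  have ht : t ∈ Icc (0 : ℝ) 1 := ⟨div_nonneg hs hT.le, div_le_one_of_le₀ hsT hT.le⟩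
  have hcomp := hX.dist_le_of_common_endpoint hσ hαT ht
  rw [hdist, div_mul_cancel₀ s hT.ne'] at hcomp
  have hlen : |T - dist q (α T)| ≤ dist q (α 0) := by
    have := abs_dist_sub_le q (α 0) (α T)
    rwa [hdist, abs_sub_comm] at this
  have hshift : dist (σ s) (σ (t * dist q (α T))) ≤ t * dist q (α 0) := by
    rw [hσ.2.2 s ⟨hs, hsσ⟩ _ ⟨mul_nonneg ht.1 dist_nonneg, mul_le_of_le_one_left dist_nonneg ht.2⟩]
    calc |s - t * dist q (α T)| = t * |T - dist q (α T)| := by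
          rw [← abs_of_nonneg ht.1, ← abs_mul, abs_of_nonneg ht.1, mul_sub,
            div_mul_cancel₀ s hT.ne']
      _ ≤ t * dist q (α 0) := mul_le_mul_of_nonneg_left hlen ht.1
  calc dist (σ s) (α s) ≤ dist (σ s) (σ (t * dist q (α T))) + dist (σ (t * dist q (α T))) (α s) :=
        dist_triangle _ _ _
    _ ≤ t * dist q (α 0) + (1 - t) * dist q (α 0) := add_le_add hshift hcomp
    _ = dist q (α 0) := by ring

/-- The ray is a cluster point, in the topology of pointwise convergence, of the segments from `q`
to `α (n + 1)`. -/
theorem CAT0.exists_ray_dist_le [ProperSpace X] (hX : CAT0 X) {α : ℝ → X} (hα : IsGeodesicRay α)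
    (q : X) :
    ∃ β : ℝ → X, IsGeodesicRay β ∧ β 0 = q ∧ ∀ s, 0 ≤ s → dist (β s) (α s) ≤ dist q (α 0) := by
  choose σ hσ hσq using fun n : ℕ => hX.1.exists_segment_dist_le_abs q (α (n + 1))
  have heventually : ∀ s : ℝ, ∀ᶠ n : ℕ in atTop, s ≤ n + 1 ∧ s ≤ dist q (α (n + 1)) := by
    intro s
    filter_upwards [(tendsto_natCast_atTop_atTop (R := ℝ)).eventually_ge_atTop (s + dist q (α 0))]
      with n hn
    have hαn : dist (α 0) (α (n + 1)) = n + 1 := by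
      rw [hα 0 _ le_rfl (by positivity), zero_sub, abs_neg, abs_of_pos (by positivity)]
    have := dist_triangle (α 0) q (α (n + 1))
    rw [hαn, dist_comm] at this
    exact ⟨by linarith [dist_nonneg (x := q) (y := α 0)], by linarith⟩
  obtain ⟨β, -, hβ⟩ := (isCompact_univ_pi fun s => isCompact_closedBall q |s|).exists_mapClusterPt
    (f := atTop) (u := σ) (le_principal_iff.2 (mem_map.2 <| univ_mem' fun n =>
      mem_univ_pi.2 fun s => mem_closedBall'.2 (hσq n s)))
  have hlim : ∀ {P : (ℝ → X) → Prop}, IsClosed {g | P g} → (∀ᶠ n in atTop, P (σ n)) → P β :=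
    fun hP hσP => hP.mem_of_mapClusterPt hβ hσP
  refine ⟨β, fun s t hs ht => hlim (P := fun g => dist (g s) (g t) = |s - t|)
    (isClosed_eq (by fun_prop) continuous_const) ?_,
    hlim (isClosed_eq (continuous_apply 0) continuous_const)
      (Eventually.of_forall fun n => (hσ n).1),
    fun s hs => hlim (P := fun g => dist (g s) (α s) ≤ dist q (α 0))
      (isClosed_le (by fun_prop) continuous_const) ?_⟩
  · filter_upwards [heventually s, heventually t] with n hsn htn
    exact (hσ n).2.2 s ⟨hs, hsn.2⟩ t ⟨ht, htn.2⟩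
  · filter_upwards [heventually s] with n hsn
    exact hX.dist_segment_ray_le hα (by positivity) (hσ n) hs hsn.1 hsn.2

end CAT0

lemma Metric.infDist_image_le_infDist_image_add {X ι : Type*} [MetricSpace X] {f g : ι → X}
    {S : Set ι} (hS : S.Nonempty) {D : ℝ} (hfg : ∀ i ∈ S, dist (f i) (g i) ≤ D) (x : X) :
    infDist x (f '' S) ≤ infDist x (g '' S) + D := by
  rw [← sub_le_iff_le_add, le_infDist (hS.image g)]
  rintro _ ⟨i, hi, rfl⟩
  calc infDist x (f '' S) - D ≤ dist x (f i) - D :=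
        sub_le_sub_right (infDist_le_dist_of_mem (mem_image_of_mem f hi)) D
    _ ≤ dist x (g i) := by linarith [dist_triangle x (g i) (f i), dist_comm (f i) (g i), hfg i hi]

lemma exists_dist_smul_le_of_isBounded {X Γ : Type*} [MetricSpace X] [SMul Γ X]
    (hiso : ∀ γ : Γ, Isometry (fun x : X => γ • x)) {C : Set X} (hC : Bornology.IsBounded C)
    (hcov : ∀ x : X, ∃ γ : Γ, ∃ c ∈ C, x = γ • c) (p : X) :
    ∃ R : ℝ, ∀ x : X, ∃ γ : Γ, dist x (γ • p) ≤ R := by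
  obtain ⟨R, hR⟩ := hC.subset_closedBall p
  refine ⟨R, fun x => ?_⟩
  obtain ⟨γ, c, hc, rfl⟩ := hcov x
  exact ⟨γ, ((hiso γ).dist_eq c p).trans_le (hR hc)⟩

/-- If rays from a fixed basepoint p come uniformly close to every orbit point γp
of a cocompact isometric action on a (proper CAT(0)) geodesic space, then the space
is almost geodesically complete. -/
theorem almost_geodesic_completeness_from_orbit {X Γ : Type*} [MetricSpace X]
    [ProperSpace X] [Group Γ] [MulAction Γ X] (hX : CAT0 X)
    (hiso : ∀ γ : Γ, Isometry (fun x : X => γ • x))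
    (C : Set X) (hC : IsCompact C)
    (hcov : ∀ x : X, ∃ (γ : Γ), ∃ c ∈ C, x = γ • c)
    (p : X) (C₀ : ℝ)
    (h : ∀ γ : Γ, ∃ α : ℝ → X, IsGeodesicRay α ∧ α 0 = p ∧
      Metric.infDist (γ • p) (α '' Set.Ici 0) ≤ C₀) :
    ∃ C₁ : ℝ, ∀ q q' : X, ∃ β : ℝ → X, IsGeodesicRay β ∧ β 0 = q ∧
      Metric.infDist q' (β '' Set.Ici 0) ≤ C₁ := by
  obtain ⟨R, hR⟩ := exists_dist_smul_le_of_isBounded hiso hC.isBounded hcov p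
  refine ⟨C₀ + R + R, fun q q' => ?_⟩
  obtain ⟨γ, hqγ⟩ := hR q
  obtain ⟨γ', hq'γ'⟩ := hR q'
  obtain ⟨α, hα, hα0, hαC₀⟩ := h (γ⁻¹ * γ')
  set γα := (fun x => γ • x) ∘ α
  obtain ⟨β, hβ, hβ0, hβγα⟩ := hX.exists_ray_dist_le (hα.isometry_comp (hiso γ)) q
  have hγαC₀ : infDist (γ' • p) (γα '' Ici 0) ≤ C₀ := by
    rwa [image_comp, show γ' • p = γ • ((γ⁻¹ * γ') • p) by rw [smul_smul, mul_inv_cancel_left],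
      infDist_image (hiso γ)]
  have hβ_near : ∀ s ∈ Ici (0 : ℝ), dist (β s) (γα s) ≤ R := fun s hs =>
    (hβγα s hs).trans (by simpa [γα, hα0] using hqγ)
  refine ⟨β, hβ, hβ0, ?_⟩
  calc infDist q' (β '' Ici 0) ≤ infDist (γ' • p) (β '' Ici 0) + dist q' (γ' • p) :=
        infDist_le_infDist_add_dist
    _ ≤ infDist (γ' • p) (γα '' Ici 0) + R + R := by
        gcongr
        exact infDist_image_le_infDist_image_add nonempty_Ici hβ_near _
    _ ≤ C₀ + R + R := by gcongr
end

section
/- Let X be the metric space obtained from the half-line [0,∞) by attaching, for each positive integer N, a segment of length N at the point N (with the induced path metric). Then X is a proper geodesic metric space that is not almost geodesically complete. -/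
open Metric Set

/-- Almost geodesic completeness: some constant C works for all pairs of points. -/
def AlmostGeodesicallyComplete (X : Type*) [MetricSpace X] : Prop :=
  ∃ C : ℝ, ∀ p q : X, ∃ α : ℝ → X, IsGeodesicRay α ∧ α 0 = p ∧
    Metric.infDist q (α '' Set.Ici 0) ≤ C

/-- The half-line [0,∞) (second coordinate 0) with, for each positive integer N,
a segment of length N attached at the point N (realized as a vertical segment). -/
def SpikeCarrier : Set (ℝ × ℝ) :=
  {p | (p.2 = 0 ∧ 0 ≤ p.1) ∨ ∃ N : ℕ, 0 < N ∧ p.1 = N ∧ 0 ≤ p.2 ∧ p.2 ≤ N}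

/-- The induced path metric on the half-line with attached segments. -/
noncomputable def spikeDist (p q : ℝ × ℝ) : ℝ :=
  if p.1 = q.1 then |p.2 - q.2| else p.2 + |p.1 - q.1| + q.2

/-! The distance from the origin to a point `(x, y)` is `x + y`, so a point at positive height on a
spike is a dead end: the triangle inequality from the origin through it to any point off that spike
is strict. A geodesic ray from the origin must leave any spike it climbs, hence it stays on the
half-line, and the tip of the spike at `N` is at distance `N` from it. Geodesic segments go down a
spike, along the half-line and up another spike; a closed ball about the origin is covered by
finitely many isometric images of compact intervals. -/

section Geodesic

variable {X : Type*} [MetricSpace X]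

def IsometricOn {α β : Type*} [PseudoMetricSpace α] [PseudoMetricSpace β] (f : α → β)
    (s : Set α) : Prop :=
  ∀ x ∈ s, ∀ y ∈ s, dist (f x) (f y) = dist x y

theorem IsometricOn.continuousOn {α β : Type*} [PseudoMetricSpace α] [PseudoMetricSpace β]
    {f : α → β} {s : Set α} (hf : IsometricOn f s) : ContinuousOn f s :=
  (LipschitzOnWith.mk_one fun x hx y hy => (hf x hx y hy).le).continuousOn

theorem IsGeodesicSegment.symm {γ : ℝ → X} {x y : X} (hγ : IsGeodesicSegment γ x y) :
    IsGeodesicSegment (fun t => γ (dist x y - t)) y x := by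
  obtain ⟨h0, h1, hd⟩ := hγ
  have hyx : dist y x = dist x y := dist_comm y x
  refine ⟨by simpa using h1, by simp [hyx, h0], fun s hs t ht => ?_⟩
  rw [hyx] at hs ht
  rw [hd _ ⟨by linarith [hs.2], by linarith [hs.1]⟩ _ ⟨by linarith [ht.2], by linarith [ht.1]⟩,
    abs_sub_comm, sub_sub_sub_cancel_left]

theorem IsometricOn.exists_isGeodesicSegment {f : ℝ → X} {s : Set ℝ} (hf : IsometricOn f s)
    (hs : s.OrdConnected) {a b : ℝ} (ha : a ∈ s) (hb : b ∈ s) :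
    ∃ γ : ℝ → X, IsGeodesicSegment γ (f a) (f b) := by
  wlog hab : a ≤ b generalizing a b
  · obtain ⟨γ, hγ⟩ := this hb ha (le_of_not_ge hab)
    exact ⟨_, hγ.symm⟩
  have hfab : dist (f a) (f b) = b - a := by
    rw [hf a ha b hb, Real.dist_eq, abs_sub_comm, abs_of_nonneg (sub_nonneg.2 hab)]
  have hmem : ∀ t ∈ Set.Icc (0 : ℝ) (b - a), a + t ∈ s := fun t ht =>
    hs.out ha hb ⟨by linarith [ht.1], by linarith [ht.2]⟩
  refine ⟨fun t => f (a + t), by simp, by simp [hfab], fun u hu v hv => ?_⟩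
  rw [hfab] at hu hv
  rw [hf _ (hmem u hu) _ (hmem v hv), Real.dist_eq, add_sub_add_left_eq_sub]

theorem IsGeodesicSegment.append {γ₁ γ₂ : ℝ → X} {x y z : X} (h₁ : IsGeodesicSegment γ₁ x y)
    (h₂ : IsGeodesicSegment γ₂ y z) (hxz : dist x z = dist x y + dist y z) :
    IsGeodesicSegment (fun t => if t ≤ dist x y then γ₁ t else γ₂ (t - dist x y)) x z := by
  obtain ⟨h₁0, h₁1, hd₁⟩ := h₁
  obtain ⟨h₂0, h₂1, hd₂⟩ := h₂
  set a := dist x y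
  set b := dist y z
  have ha : 0 ≤ a := dist_nonneg
  have hb : 0 ≤ b := dist_nonneg
  -- Across the junction, the triangle inequality through `y` bounds the distance above and the
  -- one between `x` and `z` bounds it below.
  have cross : ∀ s ∈ Set.Icc 0 a, ∀ t ∈ Set.Icc a (a + b), dist (γ₁ s) (γ₂ (t - a)) = t - s := by
    intro s hs t ht
    have hxs : dist x (γ₁ s) = s := by
      rw [← h₁0, hd₁ 0 ⟨le_rfl, ha⟩ s hs, zero_sub, abs_neg, abs_of_nonneg hs.1]
    have hys : dist (γ₁ s) y = a - s := by
      rw [← h₁1, hd₁ s hs a ⟨ha, le_rfl⟩, abs_sub_comm, abs_of_nonneg (by linarith [hs.2])]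
    have hyt : dist y (γ₂ (t - a)) = t - a := by
      rw [← h₂0, hd₂ 0 ⟨le_rfl, hb⟩ (t - a) ⟨by linarith [ht.1], by linarith [ht.2]⟩, zero_sub,
        abs_neg, abs_of_nonneg (by linarith [ht.1])]
    have htz : dist (γ₂ (t - a)) z = a + b - t := by
      rw [← h₂1, hd₂ (t - a) ⟨by linarith [ht.1], by linarith [ht.2]⟩ b ⟨hb, le_rfl⟩,
        abs_sub_comm, abs_of_nonneg (by linarith [ht.2])]
      ring
    have upper := dist_triangle (γ₁ s) y (γ₂ (t - a))
    have lower := dist_triangle4 x (γ₁ s) (γ₂ (t - a)) z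
    linarith
  have ordered : ∀ s ∈ Set.Icc 0 (a + b), ∀ t ∈ Set.Icc 0 (a + b), s ≤ t →
      dist (if s ≤ a then γ₁ s else γ₂ (s - a)) (if t ≤ a then γ₁ t else γ₂ (t - a)) = t - s := by
    intro s hs t ht hst
    by_cases hta : t ≤ a
    · rw [if_pos (hst.trans hta), if_pos hta, hd₁ s ⟨hs.1, hst.trans hta⟩ t ⟨ht.1, hta⟩,
        abs_sub_comm, abs_of_nonneg (sub_nonneg.2 hst)]
    by_cases hsa : s ≤ a
    · rw [if_pos hsa, if_neg hta]
      exact cross s ⟨hs.1, hsa⟩ t ⟨(not_le.1 hta).le, ht.2⟩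
    rw [if_neg hsa, if_neg hta, hd₂ _ ⟨by linarith, by linarith [hs.2]⟩ _
      ⟨by linarith, by linarith [ht.2]⟩, abs_sub_comm, abs_of_nonneg (by linarith)]
    ring
  refine ⟨by simp [h₁0, ha], ?_, fun s hs t ht => ?_⟩
  · dsimp only
    by_cases hb0 : b = 0
    · rw [if_pos (by linarith), hxz, hb0, add_zero, h₁1, ← dist_eq_zero.1 hb0]
    · rw [hxz, if_neg (by linarith [lt_of_le_of_ne hb (Ne.symm hb0)]), add_sub_cancel_left, h₂1]
  rw [hxz] at hs ht
  rcases le_total s t with hst | hts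
  · rw [ordered s hs t ht hst, abs_sub_comm, abs_of_nonneg (sub_nonneg.2 hst)]
  · rw [dist_comm, ordered t ht s hs hts, abs_of_nonneg (sub_nonneg.2 hts)]

theorem IsGeodesicRay.dist_eq_add {α : ℝ → X} (hα : IsGeodesicRay α) {s t : ℝ} (hs : 0 ≤ s)
    (hst : s ≤ t) : dist (α 0) (α t) = dist (α 0) (α s) + dist (α s) (α t) := by
  rw [hα 0 t le_rfl (hs.trans hst), hα 0 s le_rfl hs, hα s t hs (hs.trans hst), zero_sub,
    zero_sub, abs_neg, abs_neg, abs_of_nonneg hs, abs_of_nonneg (hs.trans hst), abs_sub_comm,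
    abs_of_nonneg (sub_nonneg.2 hst)]
  ring

end Geodesic

namespace SpikeCarrier

theorem fst_nonneg {p : ℝ × ℝ} (hp : p ∈ SpikeCarrier) : 0 ≤ p.1 := by
  rcases hp with ⟨-, h⟩ | ⟨N, -, h, -⟩
  · exact h
  · rw [h]; positivity

theorem snd_nonneg {p : ℝ × ℝ} (hp : p ∈ SpikeCarrier) : 0 ≤ p.2 := by
  rcases hp with ⟨h, -⟩ | ⟨N, -, -, h, -⟩
  · exact h.ge
  · exact h

theorem snd_le_fst {p : ℝ × ℝ} (hp : p ∈ SpikeCarrier) : p.2 ≤ p.1 := by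
  rcases hp with ⟨h, h'⟩ | ⟨N, -, h, -, h'⟩
  · rwa [h]
  · rwa [h]

theorem mk_zero_mem {x : ℝ} (hx : 0 ≤ x) : (x, (0 : ℝ)) ∈ SpikeCarrier :=
  Or.inl ⟨rfl, hx⟩

theorem natCast_mk_mem {n : ℕ} {h : ℝ} (h0 : 0 ≤ h) (hn : h ≤ n) :
    ((n : ℝ), h) ∈ SpikeCarrier := by
  rcases h0.eq_or_lt with rfl | hpos
  · exact mk_zero_mem n.cast_nonneg
  · exact Or.inr ⟨n, by exact_mod_cast hpos.trans_le hn, rfl, h0, hn⟩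

theorem mk_mem_of_le_snd {p : ℝ × ℝ} (hp : p ∈ SpikeCarrier) {h : ℝ} (h0 : 0 ≤ h)
    (hh : h ≤ p.2) : (p.1, h) ∈ SpikeCarrier := by
  rcases hp with ⟨hp2, hp1⟩ | ⟨N, hN, hp1, -, hpN⟩
  · obtain rfl : h = 0 := le_antisymm (hp2 ▸ hh) h0
    exact mk_zero_mem hp1
  · exact Or.inr ⟨N, hN, hp1, h0, hh.trans hpN⟩

theorem ordConnected_fiber (c : ℝ) : {h : ℝ | (c, h) ∈ SpikeCarrier}.OrdConnected :=
  ⟨fun _ ha _ hb _ hh => mk_mem_of_le_snd hb (snd_nonneg ha |>.trans hh.1) hh.2⟩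

end SpikeCarrier

section spikeDist

variable {p q : ℝ × ℝ}

theorem spikeDist_of_fst_eq (h : p.1 = q.1) : spikeDist p q = |p.2 - q.2| := if_pos h

theorem spikeDist_of_fst_ne (h : p.1 ≠ q.1) : spikeDist p q = p.2 + |p.1 - q.1| + q.2 :=
  if_neg h

theorem spikeDist_mk_zero_mk_zero (x y : ℝ) : spikeDist (x, 0) (y, 0) = |x - y| := by
  by_cases h : x = y
  · rw [spikeDist_of_fst_eq h, h, sub_self, sub_self]
  · rw [spikeDist_of_fst_ne h, zero_add, add_zero]

theorem spikeDist_zero_zero (hq : q ∈ SpikeCarrier) : spikeDist (0, 0) q = q.1 + q.2 := by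
  by_cases h : (0 : ℝ) = q.1
  · rw [spikeDist_of_fst_eq h, ← h, zero_sub, abs_neg, abs_of_nonneg (SpikeCarrier.snd_nonneg hq),
      zero_add]
  · rw [spikeDist_of_fst_ne h, zero_sub, abs_neg, abs_of_nonneg (SpikeCarrier.fst_nonneg hq),
      zero_add]

theorem snd_le_spikeDist (hq : q.2 = 0) : p.2 ≤ spikeDist p q := by
  by_cases h : p.1 = q.1
  · rw [spikeDist_of_fst_eq h, hq, sub_zero]
    exact le_abs_self _
  · rw [spikeDist_of_fst_ne h, hq, add_zero]
    exact le_add_of_nonneg_right (abs_nonneg _)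

theorem spikeDist_le_fst_of_fst_eq (hp : p ∈ SpikeCarrier) (hq : q ∈ SpikeCarrier)
    (h : p.1 = q.1) : spikeDist p q ≤ p.1 := by
  rw [spikeDist_of_fst_eq h, abs_sub_le_iff]
  constructor <;> linarith [SpikeCarrier.snd_nonneg hp, SpikeCarrier.snd_nonneg hq,
    SpikeCarrier.snd_le_fst hp, SpikeCarrier.snd_le_fst hq]

theorem spikeDist_zero_zero_lt (hp : p ∈ SpikeCarrier) (hq : q ∈ SpikeCarrier) (hp2 : 0 < p.2)
    (h : p.1 ≠ q.1) : spikeDist (0, 0) q < spikeDist (0, 0) p + spikeDist p q := by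
  rw [spikeDist_zero_zero hp, spikeDist_zero_zero hq, spikeDist_of_fst_ne h]
  linarith [le_abs_self (q.1 - p.1), abs_sub_comm p.1 q.1]

end spikeDist

section Model

variable {X : Type*} (φ : X ≃ SpikeCarrier)

open scoped Classical in
/-- `φ.symm` extended to the whole plane by the origin. -/
noncomputable def spikePoint (p : ℝ × ℝ) : X :=
  φ.symm (if hp : p ∈ SpikeCarrier then ⟨p, hp⟩ else ⟨(0, 0), SpikeCarrier.mk_zero_mem le_rfl⟩)

theorem spikePoint_apply (x : X) : spikePoint φ (φ x) = x := by
  rw [spikePoint, dif_pos (φ x).2, Subtype.coe_eta, Equiv.symm_apply_apply]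

variable {φ}

theorem apply_spikePoint {p : ℝ × ℝ} (hp : p ∈ SpikeCarrier) :
    (φ (spikePoint φ p) : ℝ × ℝ) = p := by
  rw [spikePoint, dif_pos hp, Equiv.apply_symm_apply]

variable [MetricSpace X]

def IsSpikeIsometry (φ : X ≃ SpikeCarrier) : Prop :=
  ∀ a b : X, dist a b = spikeDist (φ a) (φ b)

namespace IsSpikeIsometry

theorem dist_spikePoint (hφ : IsSpikeIsometry φ) {p q : ℝ × ℝ}
    (hp : p ∈ SpikeCarrier) (hq : q ∈ SpikeCarrier) :
    dist (spikePoint φ p) (spikePoint φ q) = spikeDist p q := by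
  rw [hφ _ _, apply_spikePoint hp, apply_spikePoint hq]

theorem isometricOn_base (hφ : IsSpikeIsometry φ) :
    IsometricOn (fun x : ℝ => spikePoint φ (x, 0)) (Ici 0) := fun x hx y hy => by
  rw [hφ.dist_spikePoint (SpikeCarrier.mk_zero_mem hx) (SpikeCarrier.mk_zero_mem hy),
    spikeDist_mk_zero_mk_zero, Real.dist_eq]

theorem isometricOn_fiber (hφ : IsSpikeIsometry φ) (c : ℝ) :
    IsometricOn (fun h : ℝ => spikePoint φ (c, h)) {h | (c, h) ∈ SpikeCarrier} :=
  fun h hh h' hh' => by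
    rw [hφ.dist_spikePoint hh hh', Real.dist_eq]
    exact spikeDist_of_fst_eq rfl

theorem exists_isGeodesicSegment_of_fst_eq (hφ : IsSpikeIsometry φ)
    {p q : ℝ × ℝ} (hp : p ∈ SpikeCarrier) (hq : q ∈ SpikeCarrier) (h : p.1 = q.1) :
    ∃ γ : ℝ → X, IsGeodesicSegment γ (spikePoint φ p) (spikePoint φ q) := by
  obtain ⟨c, a⟩ := p
  obtain ⟨c', b⟩ := q
  obtain rfl : c = c' := h
  exact (hφ.isometricOn_fiber c).exists_isGeodesicSegment (SpikeCarrier.ordConnected_fiber c)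
    hp hq

theorem exists_isGeodesicSegment_of_fst_ne (hφ : IsSpikeIsometry φ)
    {p q : ℝ × ℝ} (hp : p ∈ SpikeCarrier) (hq : q ∈ SpikeCarrier) (h : p.1 ≠ q.1) :
    ∃ γ : ℝ → X, IsGeodesicSegment γ (spikePoint φ p) (spikePoint φ q) := by
  have hp₀ := SpikeCarrier.mk_zero_mem (SpikeCarrier.fst_nonneg hp)
  have hq₀ := SpikeCarrier.mk_zero_mem (SpikeCarrier.fst_nonneg hq)
  obtain ⟨γ₁, hγ₁⟩ := hφ.exists_isGeodesicSegment_of_fst_eq hp hp₀ rfl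
  obtain ⟨γ₂, hγ₂⟩ := hφ.isometricOn_base.exists_isGeodesicSegment ordConnected_Ici
    (SpikeCarrier.fst_nonneg hp) (SpikeCarrier.fst_nonneg hq)
  obtain ⟨γ₃, hγ₃⟩ := hφ.exists_isGeodesicSegment_of_fst_eq hq₀ hq rfl
  have hp2 := SpikeCarrier.snd_nonneg hp
  have hq2 := SpikeCarrier.snd_nonneg hq
  have down : spikeDist p (p.1, 0) = p.2 := by
    rw [spikeDist_of_fst_eq (p := p) (q := (p.1, 0)) rfl, sub_zero, abs_of_nonneg hp2]
  have up : spikeDist (q.1, 0) q = q.2 := by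
    rw [spikeDist_of_fst_eq (p := (q.1, 0)) (q := q) rfl, zero_sub, abs_neg, abs_of_nonneg hq2]
  have across : spikeDist (p.1, 0) q = |p.1 - q.1| + q.2 := by
    rw [spikeDist_of_fst_ne (p := (p.1, 0)) h, zero_add]
  refine ⟨_, hγ₁.append (hγ₂.append hγ₃ ?_) ?_⟩
  · rw [hφ.dist_spikePoint hp₀ hq, hφ.dist_spikePoint hp₀ hq₀, hφ.dist_spikePoint hq₀ hq,
      across, up, spikeDist_mk_zero_mk_zero]
  · rw [hφ.dist_spikePoint hp hq, hφ.dist_spikePoint hp hp₀, hφ.dist_spikePoint hp₀ hq, down,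
      across, spikeDist_of_fst_ne h, add_assoc]

theorem geodesicSpace (hφ : IsSpikeIsometry φ) : GeodesicSpace X := by
  intro x y
  rw [← spikePoint_apply φ x, ← spikePoint_apply φ y]
  by_cases h : (φ x : ℝ × ℝ).1 = (φ y : ℝ × ℝ).1
  · exact hφ.exists_isGeodesicSegment_of_fst_eq (φ x).2 (φ y).2 h
  · exact hφ.exists_isGeodesicSegment_of_fst_ne (φ x).2 (φ y).2 h

theorem isCompact_closedBall_natCast (hφ : IsSpikeIsometry φ) (n : ℕ) :
    IsCompact (closedBall (spikePoint φ (0, 0)) n) := by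
  have hbase : IsCompact ((fun x : ℝ => spikePoint φ (x, 0)) '' Icc 0 n) :=
    isCompact_Icc.image_of_continuousOn
      (hφ.isometricOn_base.continuousOn.mono Icc_subset_Ici_self)
  have hspikes : IsCompact (⋃ k ∈ Finset.range (n + 1),
      (fun h : ℝ => spikePoint φ ((k : ℝ), h)) '' Icc 0 k) :=
    (Finset.range (n + 1)).isCompact_biUnion fun k _ => isCompact_Icc.image_of_continuousOn
      ((hφ.isometricOn_fiber k).continuousOn.mono fun _ hh =>
        SpikeCarrier.natCast_mk_mem hh.1 hh.2)
  refine (hbase.union hspikes).of_isClosed_subset isClosed_closedBall fun z hz => ?_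
  rw [mem_closedBall, dist_comm, ← spikePoint_apply φ z,
    hφ.dist_spikePoint (SpikeCarrier.mk_zero_mem le_rfl) (φ z).2,
    spikeDist_zero_zero (φ z).2] at hz
  rcases (φ z).2 with ⟨h2, h1⟩ | ⟨N, -, h1, h0, hN⟩
  · refine Or.inl ⟨(φ z : ℝ × ℝ).1, ⟨h1, by linarith⟩, ?_⟩
    rw [← h2]
    exact spikePoint_apply φ z
  · have hNn : N ≤ n := by exact_mod_cast (show (N : ℝ) ≤ n by linarith)
    refine Or.inr (mem_iUnion₂.2
      ⟨N, Finset.mem_range_succ_iff.2 hNn, (φ z : ℝ × ℝ).2, ⟨h0, hN⟩, ?_⟩)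
    rw [← h1]
    exact spikePoint_apply φ z

theorem properSpace (hφ : IsSpikeIsometry φ) : ProperSpace X :=
  .of_seq_closedBall tendsto_natCast_atTop_atTop
    (Filter.Eventually.of_forall hφ.isCompact_closedBall_natCast)

theorem snd_apply_eq_zero_of_isGeodesicRay (hφ : IsSpikeIsometry φ) {α : ℝ → X}
    (hα : IsGeodesicRay α) (hα0 : α 0 = spikePoint φ (0, 0)) {s : ℝ} (hs : 0 ≤ s) :
    (φ (α s) : ℝ × ℝ).2 = 0 := by
  by_contra hne
  have hpos : 0 < (φ (α s) : ℝ × ℝ).2 := (SpikeCarrier.snd_nonneg (φ (α s)).2).lt_of_ne' hne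
  obtain ⟨t, hst, hfar⟩ : ∃ t, s ≤ t ∧ (φ (α s) : ℝ × ℝ).1 < dist (α s) (α t) := by
    have hx := SpikeCarrier.fst_nonneg (φ (α s)).2
    refine ⟨s + (φ (α s) : ℝ × ℝ).1 + 1, by linarith, ?_⟩
    rw [hα s _ hs (by linarith), abs_sub_comm, abs_of_nonneg (by linarith)]
    linarith
  have hoff : (φ (α s) : ℝ × ℝ).1 ≠ (φ (α t) : ℝ × ℝ).1 := fun h =>
    (spikeDist_le_fst_of_fst_eq (φ (α s)).2 (φ (α t)).2 h).not_gt (hφ _ _ ▸ hfar)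
  have hlt := spikeDist_zero_zero_lt (φ (α s)).2 (φ (α t)).2 hpos hoff
  rw [← apply_spikePoint (SpikeCarrier.mk_zero_mem le_rfl), ← hα0, ← hφ, ← hφ, ← hφ] at hlt
  exact hlt.ne (hα.dist_eq_add hs hst)

theorem not_almostGeodesicallyComplete (hφ : IsSpikeIsometry φ) :
    ¬ AlmostGeodesicallyComplete X := by
  rintro ⟨C, hC⟩
  obtain ⟨N, hN⟩ := exists_nat_gt (max C 0)
  have htop : ((N : ℝ), (N : ℝ)) ∈ SpikeCarrier :=
    SpikeCarrier.natCast_mk_mem N.cast_nonneg le_rfl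
  obtain ⟨α, hα, hα0, hαC⟩ := hC (spikePoint φ (0, 0)) (spikePoint φ (N, N))
  have hfar : (N : ℝ) ≤ infDist (spikePoint φ (N, N)) (α '' Ici 0) := by
    rw [le_infDist ⟨α 0, mem_image_of_mem α (mem_Ici.2 le_rfl)⟩]
    rintro _ ⟨s, hs, rfl⟩
    rw [← spikePoint_apply φ (α s), hφ.dist_spikePoint htop (φ (α s)).2]
    exact snd_le_spikeDist (p := ((N : ℝ), (N : ℝ)))
      (hφ.snd_apply_eq_zero_of_isGeodesicRay hα hα0 hs)
  linarith [le_max_left C 0]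

end IsSpikeIsometry

end Model

/-- The half-line with a segment of length N attached at each positive integer N,
endowed with the path metric, is a proper geodesic space which is not almost
geodesically complete. -/
theorem spike_space_not_almost_geodesically_complete
    (X : Type*) [MetricSpace X] (φ : X ≃ SpikeCarrier)
    (hφ : ∀ a b : X, dist a b = spikeDist (φ a) (φ b)) :
    ProperSpace X ∧ GeodesicSpace X ∧ ¬ AlmostGeodesicallyComplete X :=
  ⟨IsSpikeIsometry.properSpace hφ, IsSpikeIsometry.geodesicSpace hφ,
    IsSpikeIsometry.not_almostGeodesicallyComplete hφ⟩
end

section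
/- Let X be a proper geodesic Gromov δ-hyperbolic space in which every point lies on some bi-infinite geodesic line. Then X is almost geodesically complete with constant depending only on δ: for all p, q ∈ X, if ℓ is a geodesic line through q and r₁, r₂ are geodesic rays from p asymptotic to the two ends of ℓ, then q lies within a bounded distance (depending only on δ) of r₁ ∪ r₂. -/
/-!
For `T` large, thinness of the triangle `ℓ (-T), ℓ T, p` puts `q = ℓ 0` within `δ` of a point `w`
on a side from `p`, say `[ℓ T, p]`. If the ray `r₁` from `p` passes within `K` of `ℓ T`, at `r₁ u`,
thinness of the triangle `ℓ T, p, r₁ u` puts `w` within `δ` of `r₁`: it cannot be near the short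
side `[ℓ T, r₁ u]`, since `q` is far from `ℓ T`. Hence `q` is `2δ`-close to `r₁ ∪ r₂`.

For arbitrary `p` and `q`, take a line `ℓ` through `q`: the geodesics from `p` to `ℓ (±n)` all
pass `δ`-close to `q` at a bounded time, and by properness they subconverge to a ray from `p`,
which then passes `δ`-close to `q`.
-/

open Metric Set Filter Topology

/-- Every geodesic triangle is δ-thin: each side lies in the δ-neighborhood of the
union of the other two. -/
def DeltaThin (X : Type*) [MetricSpace X] (δ : ℝ) : Prop :=
  ∀ (x y z : X) (γxy γyz γxz : ℝ → X),
    IsGeodesicSegment γxy x y → IsGeodesicSegment γyz y z → IsGeodesicSegment γxz x z →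
    ∀ t ∈ Set.Icc (0:ℝ) (dist x y),
      Metric.infDist (γxy t)
        (γyz '' Set.Icc 0 (dist y z) ∪ γxz '' Set.Icc 0 (dist x z)) ≤ δ


variable {X : Type*} [MetricSpace X]

namespace IsGeodesicSegment

variable {γ : ℝ → X} {x y : X}

theorem dist_left (hγ : IsGeodesicSegment γ x y) {s : ℝ} (hs : s ∈ Icc 0 (dist x y)) :
    dist x (γ s) = s := by
  rw [← hγ.1, hγ.2.2 0 ⟨le_rfl, dist_nonneg⟩ s hs, zero_sub, abs_neg, abs_of_nonneg hs.1]

theorem isCompact_image (hγ : IsGeodesicSegment γ x y) : IsCompact (γ '' Icc 0 (dist x y)) :=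
  isCompact_Icc.image_of_continuousOn <| LipschitzOnWith.continuousOn <|
    LipschitzOnWith.mk_one fun s hs t ht => by rw [hγ.2.2 s hs t ht, Real.dist_eq]

theorem reverse (hγ : IsGeodesicSegment γ x y) :
    IsGeodesicSegment (fun t => γ (dist x y - t)) y x := by
  obtain ⟨h0, h1, hd⟩ := hγ
  refine ⟨by simpa using h1, by rw [dist_comm y x]; simpa using h0, fun s hs t ht => ?_⟩
  rw [dist_comm y x] at hs ht
  rw [hd _ ⟨by linarith [hs.2], by linarith [hs.1]⟩ _ ⟨by linarith [ht.2], by linarith [ht.1]⟩,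
    abs_sub_comm]
  ring_nf

end IsGeodesicSegment

theorem IsGeodesicRay.isGeodesicSegment_s13 {r : ℝ → X} (hr : IsGeodesicRay r) {u : ℝ}
    (hu : 0 ≤ u) : IsGeodesicSegment r (r 0) (r u) := by
  have hd : dist (r 0) (r u) = u := by rw [hr 0 u le_rfl hu, zero_sub, abs_neg, abs_of_nonneg hu]
  exact ⟨rfl, by rw [hd], fun s hs t ht => hr s t (hd ▸ hs).1 (hd ▸ ht).1⟩

theorem Isometry.dist_apply_zero {ℓ : ℝ → X} (hℓ : Isometry ℓ) (t : ℝ) :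
    dist (ℓ 0) (ℓ t) = |t| := by
  rw [hℓ.dist_eq, Real.dist_eq, zero_sub, abs_neg]

theorem Isometry.isGeodesicSegment_s13 {ℓ : ℝ → X} (hℓ : Isometry ℓ) {a b : ℝ} (hab : a ≤ b) :
    IsGeodesicSegment (fun s => ℓ (a + s)) (ℓ a) (ℓ b) := by
  have hd : dist (ℓ a) (ℓ b) = b - a := by
    rw [hℓ.dist_eq, Real.dist_eq, abs_sub_comm, abs_of_nonneg (by linarith)]
  refine ⟨by simp, by simp [hd], fun s _ t _ => ?_⟩
  rw [hℓ.dist_eq, Real.dist_eq, add_sub_add_left_eq_sub]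

theorem exists_isGeodesicRay_mapClusterPt [ProperSpace X] {p : X} {y : ℕ → X} {σ : ℕ → ℝ → X}
    (hσ : ∀ n, IsGeodesicSegment (σ n) p (y n))
    (hy : Tendsto (fun n => dist p (y n)) atTop atTop)
    {t : ℕ → ℝ} (ht : ∀ n, t n ∈ Icc 0 (dist p (y n))) {B : ℝ} (htB : ∀ n, t n ≤ B) :
    ∃ α : ℝ → X, IsGeodesicRay α ∧ α 0 = p ∧
      ∃ u ≥ 0, MapClusterPt (α u) atTop fun n => σ n (t n) := by
  -- `α` is the pointwise limit along a free ultrafilter; it exists because `σ n r` stays in the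
  -- compact ball `closedBall p r`.
  set U := hyperfilter ℕ
  have hU : (U : Filter ℕ) ≤ atTop := Nat.cofinite_eq_atTop ▸ hyperfilter_le_cofinite
  have hlong : ∀ r ≥ 0, ∀ᶠ n in (U : Filter ℕ), r ∈ Icc 0 (dist p (y n)) := fun r hr =>
    ((hy.eventually_ge_atTop r).filter_mono hU).mono fun n hn => ⟨hr, hn⟩
  have hlim : ∀ r ≥ 0, ∃ x, Tendsto (fun n => σ n r) U (𝓝 x) := fun r hr => by
    obtain ⟨x, -, hx⟩ := (isCompact_closedBall p r).ultrafilter_le_nhds' (U.map _) <|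
      (hlong r hr).mono fun n hn => by rw [mem_closedBall', (hσ n).dist_left hn]
    exact ⟨x, hx⟩
  have : Nonempty X := ⟨p⟩
  set α : ℝ → X := fun r => limUnder (U : Filter ℕ) fun n => σ n r
  have hα : ∀ r ≥ 0, Tendsto (fun n => σ n r) U (𝓝 (α r)) := fun r hr =>
    tendsto_nhds_limUnder (hlim r hr)
  have hray : IsGeodesicRay α := fun r s hr hs =>
    tendsto_nhds_unique ((hα r hr).dist (hα s hs)) <| tendsto_const_nhds.congr' <|
      (hlong r hr).and (hlong s hs) |>.mono fun n hn => ((hσ n).2.2 r hn.1 s hn.2).symm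
  have hα0 : α 0 = p :=
    tendsto_nhds_unique (hα 0 le_rfl) (by simp only [(hσ _).1]; exact tendsto_const_nhds)
  obtain ⟨u, hu, htu⟩ := (isCompact_Icc (a := 0) (b := B)).ultrafilter_le_nhds' (U.map t) <|
    show ∀ᶠ n in (U : Filter ℕ), t n ∈ Icc 0 B from
      .of_forall fun n => ⟨(ht n).1, htB n⟩
  have hconv : Tendsto (fun n => dist (σ n u) (σ n (t n))) U (𝓝 0) := by
    have habs : Tendsto (fun n => |u - t n|) U (𝓝 0) := by
      simpa using (tendsto_const_nhds (x := u)).sub (htu : Tendsto t U (𝓝 u)) |>.abs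
    exact habs.congr' <| (hlong u hu.1).mono fun n hn => ((hσ n).2.2 u hn (t n) (ht n)).symm
  exact ⟨α, hray, hα0, u, hu.1,
    mapClusterPt_iff_ultrafilter.2 ⟨U, hU, (hα u hu.1).congr_dist hconv⟩⟩

namespace DeltaThin

variable {δ : ℝ}

theorem exists_dist_le (hthin : DeltaThin X δ) {x y z : X} {γxy γyz γxz : ℝ → X}
    (hxy : IsGeodesicSegment γxy x y) (hyz : IsGeodesicSegment γyz y z)
    (hxz : IsGeodesicSegment γxz x z) {t : ℝ} (ht : t ∈ Icc 0 (dist x y)) :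
    (∃ s ∈ Icc 0 (dist y z), dist (γxy t) (γyz s) ≤ δ) ∨
      ∃ s ∈ Icc 0 (dist x z), dist (γxy t) (γxz s) ≤ δ := by
  obtain ⟨w, hw, hdist⟩ :=
    (hyz.isCompact_image.union hxz.isCompact_image).exists_infDist_eq_dist
      ⟨γyz 0, Or.inl (mem_image_of_mem _ ⟨le_rfl, dist_nonneg⟩)⟩ (γxy t)
  have hw_le : dist (γxy t) w ≤ δ := hdist ▸ hthin x y z γxy γyz γxz hxy hyz hxz t ht
  rcases hw with ⟨s, hs, rfl⟩ | ⟨s, hs, rfl⟩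
  exacts [Or.inl ⟨s, hs, hw_le⟩, Or.inr ⟨s, hs, hw_le⟩]

theorem exists_dist_le_or_dist_le (hthin : DeltaThin X δ) (hgeo : GeodesicSpace X)
    {x y z : X} {γxy γyz : ℝ → X} (hxy : IsGeodesicSegment γxy x y)
    (hyz : IsGeodesicSegment γyz y z) {t : ℝ} (ht : t ∈ Icc 0 (dist x y)) :
    (∃ s ∈ Icc 0 (dist y z), dist (γxy t) (γyz s) ≤ δ) ∨
      dist x (γxy t) ≤ dist x z + δ := by
  obtain ⟨γxz, hxz⟩ := hgeo x z
  refine (hthin.exists_dist_le hxy hyz hxz ht).imp_right fun ⟨s, hs, hdist⟩ => ?_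
  calc dist x (γxy t) ≤ dist x (γxz s) + dist (γxy t) (γxz s) := dist_triangle_right _ _ _
    _ ≤ dist x z + δ := add_le_add ((hxz.dist_left hs).trans_le hs.2) hdist

theorem infDist_le_of_dist_segment_le (hthin : DeltaThin X δ) (hgeo : GeodesicSpace X)
    {r : ℝ → X} (hr : IsGeodesicRay r) {a q : X} {K : ℝ} (hK : infDist a (r '' Ici 0) ≤ K)
    {σ : ℝ → X} (hσ : IsGeodesicSegment σ a (r 0)) {s : ℝ}
    (hs : s ∈ Icc 0 (dist a (r 0)))
    (hq : dist q (σ s) ≤ δ) (hfar : 2 * δ + K + 1 < dist q a) :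
    infDist q (r '' Ici 0) ≤ 2 * δ := by
  obtain ⟨_, ⟨u, hu, rfl⟩, hau⟩ := (infDist_lt_iff (nonempty_Ici.image r)).1
    (hK.trans_lt (lt_add_one K))
  -- In the triangle `a, r 0, r u`, the point `σ s` cannot be near `[a, r u]`: that side is
  -- short and `q` is far from `a`.
  rcases hthin.exists_dist_le_or_dist_le hgeo hσ (hr.isGeodesicSegment_s13 hu) hs with
    ⟨v, hv, hσr⟩ | hnear
  · calc infDist q (r '' Ici 0) ≤ dist q (r v) :=
          infDist_le_dist_of_mem (mem_image_of_mem r hv.1)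
      _ ≤ dist q (σ s) + dist (σ s) (r v) := dist_triangle _ _ _
      _ ≤ 2 * δ := by linarith
  · linarith [dist_triangle_right q a (σ s)]

theorem exists_dist_le_of_isometry (hthin : DeltaThin X δ) {ℓ : ℝ → X} (hℓ : Isometry ℓ)
    {T : ℝ} (hT : 0 ≤ T) {p : X} {σ₁ σ₂ : ℝ → X}
    (h₁ : IsGeodesicSegment σ₁ (ℓ T) p) (h₂ : IsGeodesicSegment σ₂ (ℓ (-T)) p) :
    (∃ s ∈ Icc 0 (dist (ℓ T) p), dist (ℓ 0) (σ₁ s) ≤ δ) ∨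
      ∃ s ∈ Icc 0 (dist (ℓ (-T)) p), dist (ℓ 0) (σ₂ s) ≤ δ := by
  have hT' : T ∈ Icc 0 (dist (ℓ (-T)) (ℓ T)) := by
    rw [hℓ.dist_eq, Real.dist_eq, abs_sub_comm, abs_of_nonneg (by linarith)]
    constructor <;> linarith
  simpa using hthin.exists_dist_le (hℓ.isGeodesicSegment_s13 (by linarith : -T ≤ T)) h₁ h₂ hT'

theorem infDist_le_of_asymptotic_rays (hthin : DeltaThin X δ) (hgeo : GeodesicSpace X)
    {ℓ : ℝ → X} (hℓ : Isometry ℓ) {r₁ r₂ : ℝ → X} (hr₁ : IsGeodesicRay r₁)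
    (hr₂ : IsGeodesicRay r₂) (hr : r₂ 0 = r₁ 0) {K₁ K₂ : ℝ}
    (hK₁ : ∀ t ≥ 0, infDist (ℓ t) (r₁ '' Ici 0) ≤ K₁)
    (hK₂ : ∀ t ≥ 0, infDist (ℓ (-t)) (r₂ '' Ici 0) ≤ K₂) :
    infDist (ℓ 0) (r₁ '' Ici 0 ∪ r₂ '' Ici 0) ≤ 2 * δ := by
  set T := 2 * |δ| + |K₁| + |K₂| + 2
  have hT : 0 ≤ T := by positivity
  obtain ⟨σ₁, hσ₁⟩ := hgeo (ℓ T) (r₁ 0)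
  obtain ⟨σ₂, hσ₂⟩ := hgeo (ℓ (-T)) (r₂ 0)
  rcases hthin.exists_dist_le_of_isometry hℓ hT hσ₁ (hr ▸ hσ₂) with ⟨s, hs, hq⟩ | ⟨s, hs, hq⟩
  · refine (infDist_le_infDist_of_subset subset_union_left (nonempty_Ici.image r₁)).trans
      (hthin.infDist_le_of_dist_segment_le hgeo hr₁ (hK₁ T hT) hσ₁ hs hq ?_)
    rw [hℓ.dist_apply_zero, abs_of_nonneg hT]
    linarith [le_abs_self δ, le_abs_self K₁, abs_nonneg K₂]
  · refine (infDist_le_infDist_of_subset subset_union_right (nonempty_Ici.image r₂)).trans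
      (hthin.infDist_le_of_dist_segment_le hgeo hr₂ (hK₂ T hT) hσ₂ (by rwa [hr]) hq ?_)
    rw [hℓ.dist_apply_zero, abs_neg, abs_of_nonneg hT]
    linarith [le_abs_self δ, le_abs_self K₂, abs_nonneg K₁]

theorem exists_isGeodesicSegment_dist_le (hthin : DeltaThin X δ) (hgeo : GeodesicSpace X)
    {ℓ : ℝ → X} (hℓ : Isometry ℓ) {T : ℝ} (hT : 0 ≤ T) (p : X) :
    ∃ y σ, IsGeodesicSegment σ p y ∧ dist (ℓ 0) y = T ∧
      ∃ s ∈ Icc 0 (dist p y), dist (ℓ 0) (σ s) ≤ δ := by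
  have key : ∀ y, dist (ℓ 0) y = T → ∀ σ, IsGeodesicSegment σ p y →
      ∀ s ∈ Icc 0 (dist y p), dist (ℓ 0) (σ (dist p y - s)) ≤ δ →
      ∃ y σ, IsGeodesicSegment σ p y ∧ dist (ℓ 0) y = T ∧
        ∃ s ∈ Icc 0 (dist p y), dist (ℓ 0) (σ s) ≤ δ := fun y hy σ hσ s hs hq =>
    ⟨y, σ, hσ, hy, dist p y - s,
      by rw [dist_comm] at hs; constructor <;> linarith [hs.1, hs.2], hq⟩
  obtain ⟨σ₁, hσ₁⟩ := hgeo p (ℓ T)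
  obtain ⟨σ₂, hσ₂⟩ := hgeo p (ℓ (-T))
  rcases hthin.exists_dist_le_of_isometry hℓ hT hσ₁.reverse hσ₂.reverse with
    ⟨s, hs, hq⟩ | ⟨s, hs, hq⟩
  · exact key _ (by rw [hℓ.dist_apply_zero, abs_of_nonneg hT]) σ₁ hσ₁ s hs hq
  · exact key _ (by rw [hℓ.dist_apply_zero, abs_neg, abs_of_nonneg hT]) σ₂ hσ₂ s hs hq

theorem exists_isGeodesicRay_infDist_le [ProperSpace X] (hthin : DeltaThin X δ)
    (hgeo : GeodesicSpace X) {ℓ : ℝ → X} (hℓ : Isometry ℓ) (p : X) :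
    ∃ α : ℝ → X, IsGeodesicRay α ∧ α 0 = p ∧ infDist (ℓ 0) (α '' Ici 0) ≤ δ := by
  choose y σ hσ hy s hs hq using fun n : ℕ =>
    hthin.exists_isGeodesicSegment_dist_le hgeo hℓ (Nat.cast_nonneg n) p
  have hlen : Tendsto (fun n => dist p (y n)) atTop atTop := by
    refine tendsto_atTop_mono (fun n => ?_)
      (tendsto_atTop_add_const_right _ (-dist (ℓ 0) p) tendsto_natCast_atTop_atTop)
    linarith [hy n, dist_triangle (ℓ 0) p (y n)]
  have hsB : ∀ n, s n ≤ dist p (ℓ 0) + δ := fun n => by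
    linarith [(hσ n).dist_left (hs n), dist_triangle p (ℓ 0) (σ n (s n)), hq n]
  obtain ⟨α, hα, hα0, u, hu, hclus⟩ := exists_isGeodesicRay_mapClusterPt hσ hlen hs hsB
  refine ⟨α, hα, hα0, (infDist_le_dist_of_mem (mem_image_of_mem α hu)).trans ?_⟩
  exact mem_closedBall'.1 <| isClosed_closedBall.mem_of_mapClusterPt hclus <|
    Eventually.of_forall fun n => mem_closedBall'.2 (hq n)

end DeltaThin

/-- A proper geodesic δ-hyperbolic space in which every point lies on a bi-infinite
geodesic line is almost geodesically complete, with constant depending only on δ: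
for any p, q, any geodesic line ℓ through q, and any geodesic rays r₁, r₂ from p
asymptotic to the two ends of ℓ, the point q is within distance C(δ) of r₁ ∪ r₂. -/
theorem hyperbolic_almost_geodesically_complete :
    ∃ C : ℝ → ℝ, ∀ (X : Type) [MetricSpace X] (δ : ℝ), 0 ≤ δ →
      ProperSpace X → GeodesicSpace X → DeltaThin X δ →
      (∀ q : X, ∃ ℓ : ℝ → X, Isometry ℓ ∧ ∃ t : ℝ, ℓ t = q) →
      (∀ (p q : X) (ℓ : ℝ → X), Isometry ℓ → ℓ 0 = q →
        ∀ r₁ r₂ : ℝ → X, IsGeodesicRay r₁ → r₁ 0 = p → IsGeodesicRay r₂ → r₂ 0 = p →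
        (∃ K : ℝ, ∀ t : ℝ, 0 ≤ t →
          Metric.infDist (r₁ t) (ℓ '' Set.Ici 0) ≤ K ∧
          Metric.infDist (ℓ t) (r₁ '' Set.Ici 0) ≤ K) →
        (∃ K : ℝ, ∀ t : ℝ, 0 ≤ t →
          Metric.infDist (r₂ t) (ℓ '' Set.Iic 0) ≤ K ∧
          Metric.infDist (ℓ (-t)) (r₂ '' Set.Ici 0) ≤ K) →
        Metric.infDist q (r₁ '' Set.Ici 0 ∪ r₂ '' Set.Ici 0) ≤ C δ) ∧
      (∀ p q : X, ∃ α : ℝ → X, IsGeodesicRay α ∧ α 0 = p ∧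
        Metric.infDist q (α '' Set.Ici 0) ≤ C δ) := by
  refine ⟨fun δ => 2 * δ, fun X _ δ hδ _ hgeo hthin hline => ⟨?_, fun p q => ?_⟩⟩
  · rintro p q ℓ hℓ rfl r₁ r₂ hr₁ hr₁0 hr₂ hr₂0 ⟨K₁, hK₁⟩ ⟨K₂, hK₂⟩
    exact hthin.infDist_le_of_asymptotic_rays hgeo hℓ hr₁ hr₂ (hr₂0.trans hr₁0.symm)
      (fun t ht => (hK₁ t ht).2) fun t ht => (hK₂ t ht).2
  · obtain ⟨ℓ, hℓ, t, rfl⟩ := hline q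
    obtain ⟨α, hα, hα0, hqα⟩ :=
      hthin.exists_isGeodesicRay_infDist_le hgeo (hℓ.comp (isometry_add_left t)) p
    exact ⟨α, hα, hα0, by simpa using hqα.trans (by linarith)⟩
end
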